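/- arXiv:2310.13944 — 9 statements merged into one kernel-verified Lean document; each statement's English description precedes it below -/
import Mathlib

section
/- Let L be a complete lattice, J ⊆ L a set that join-generates L (every element of L is the join of some subset of J), and f : L → L a monotone map. Let W be the least fixed point of the monotone operator Φ_f on the power set of J given by Φ_f(U) = { j ∈ J : j ≤ f(⋁U) } (W is exactly the set of positions j ∈ J from which ∃ has a winning strategy in the unfolding game in which infinite plays are won by ∀). Then ⋁W is the least fixed point of f. -/
/-- Let `L` be a complete lattice, `J ⊆ L` a set that join-generates `L`,
and `f : L → L` a monotone map. If `W` is the least fixed point of the operator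
`Φ_f(U) = { j ∈ J : j ≤ f (⋁ U) }` on the power set of `J`, then `⋁ W` is the least
fixed point of `f`. -/
theorem sSup_lfp_of_unfolding_game {L : Type*} [CompleteLattice L] (J : Set L)
    (hJ : ∀ a : L, ∃ S ⊆ J, a = sSup S)
    (f : L → L) (hf : Monotone f) (W : Set L)
    (hW : IsLeast {U : Set L | U ⊆ J ∧ {j ∈ J | j ≤ f (sSup U)} = U} W) :
    IsLeast (Function.fixedPoints f) (sSup W) := by
  obtain ⟨⟨hWJ, hWfix⟩, hWleast⟩ := hW
  have h1 : sSup W ≤ f (sSup W) := by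
    apply sSup_le
    intro j hj
    rw [← hWfix] at hj
    exact hj.2
  have h2 : f (sSup W) ≤ sSup W := by
    obtain ⟨S, hSJ, hS⟩ := hJ (f (sSup W))
    rw [hS]
    apply sSup_le
    intro j hj
    apply le_sSup
    rw [← hWfix]
    exact ⟨hSJ hj, hS ▸ le_sSup hj⟩
  constructor
  · exact le_antisymm h2 h1
  · intro x hx
    have hxfix : f x = x := hx
    set U : Set L := {j ∈ J | j ≤ x} with hU
    obtain ⟨S, hSJ, hS⟩ := hJ x
    have hSU : S ⊆ U := fun j hj => ⟨hSJ hj, hS ▸ le_sSup hj⟩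
    have hsupU : sSup U = x := by
      apply le_antisymm
      · exact sSup_le fun j hj => hj.2
      · rw [hS]; exact sSup_le_sSup hSU
    have hUfix : U ∈ {U : Set L | U ⊆ J ∧ {j ∈ J | j ≤ f (sSup U)} = U} := by
      refine ⟨fun j hj => hj.1, ?_⟩
      rw [hsupU, hxfix]
    exact sSup_le fun j hj => (hWleast hUfix hj).2
end

section
/- Let L be a complete lattice, M ⊆ L a set that meet-generates L (every element of L is the meet of some subset of M), and f : L → L a monotone map. Let W be the greatest fixed point of the monotone operator Ψ_f on the power set of M given by Ψ_f(U) = { m ∈ M : f(⋀U) ≤ m } (W is exactly the set of positions m ∈ M from which ∀ has a winning strategy in the dual unfolding game in which infinite plays are won by ∀). Then ⋀W is the least fixed point of f. -/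
/-- Let `L` be a complete lattice, `M ⊆ L` a set that meet-generates `L`,
and `f : L → L` a monotone map. If `W` is the greatest fixed point of the operator
`Ψ_f(U) = { m ∈ M : f (⋀ U) ≤ m }` on the power set of `M`, then `⋀ W` is the least
fixed point of `f`. -/
theorem sInf_lfp_of_dual_unfolding_game {L : Type*} [CompleteLattice L] (M : Set L)
    (hM : ∀ a : L, ∃ S ⊆ M, a = sInf S)
    (f : L → L) (hf : Monotone f) (W : Set L)
    (hW : IsGreatest {U : Set L | U ⊆ M ∧ {m ∈ M | f (sInf U) ≤ m} = U} W) :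
    IsLeast (Function.fixedPoints f) (sInf W) := by
  obtain ⟨⟨hWM, hWfix⟩, hWmax⟩ := hW
  have hle : f (sInf W) ≤ sInf W := by
    apply le_sInf
    intro m hm
    rw [← hWfix] at hm
    exact hm.2
  have hge : sInf W ≤ f (sInf W) := by
    obtain ⟨S, hSM, hS⟩ := hM (f (sInf W))
    rw [hS]
    apply le_sInf
    intro m hm
    have : m ∈ W := by
      rw [← hWfix]
      exact ⟨hSM hm, hS ▸ sInf_le hm⟩
    exact sInf_le this
  constructor
  · exact le_antisymm hle hge
  · intro x hx
    obtain ⟨S, hSM, hS⟩ := hM x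
    set U : Set L := {m ∈ M | x ≤ m} with hU
    have hxU : sInf U = x := by
      apply le_antisymm
      · calc sInf U ≤ sInf S := sInf_le_sInf (fun m hm => ⟨hSM hm, hS ▸ sInf_le hm⟩)
        _ = x := hS.symm
      · exact le_sInf fun m hm => hm.2
    have hUW : U ⊆ W := by
      apply hWmax
      constructor
      · exact fun m hm => hm.1
      · rw [hxU, hx]
    calc sInf W ≤ sInf U := sInf_le_sInf hUW
    _ = x := hxU
end

section
/- Let L be a complete lattice, M ⊆ L a set that meet-generates L (every element of L is the meet of some subset of M), and f : L → L a monotone map. Let W be the least fixed point of the monotone operator Ψ_f on the power set of M given by Ψ_f(U) = { m ∈ M : f(⋀U) ≤ m } (W is exactly the set of positions m ∈ M from which ∀ has a winning strategy in the dual unfolding game in which infinite plays are won by ∃). Then ⋀W is the greatest fixed point of f. -/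
/-- Let `L` be a complete lattice, `M ⊆ L` a set that meet-generates `L`,
and `f : L → L` a monotone map. If `W` is the least fixed point of the operator
`Ψ_f(U) = { m ∈ M : f (⋀ U) ≤ m }` on the power set of `M`, then `⋀ W` is the greatest
fixed point of `f`. -/
theorem sInf_gfp_of_dual_unfolding_game {L : Type*} [CompleteLattice L] (M : Set L)
    (hM : ∀ a : L, ∃ S ⊆ M, a = sInf S)
    (f : L → L) (hf : Monotone f) (W : Set L)
    (hW : IsLeast {U : Set L | U ⊆ M ∧ {m ∈ M | f (sInf U) ≤ m} = U} W) :
    IsGreatest (Function.fixedPoints f) (sInf W) := by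
  obtain ⟨⟨hWM, hWfix⟩, hWleast⟩ := hW
  -- sInf W is a fixed point
  have h1 : f (sInf W) ≤ sInf W := by
    apply le_sInf
    intro m hm
    rw [← hWfix] at hm
    exact hm.2
  have h2 : sInf W ≤ f (sInf W) := by
    obtain ⟨S, hSM, hS⟩ := hM (f (sInf W))
    rw [hS]
    apply sInf_le_sInf
    intro s hs
    rw [← hWfix]
    exact ⟨hSM hs, hS ▸ sInf_le hs⟩
  have hfix : f (sInf W) = sInf W := le_antisymm h1 h2
  constructor
  · exact hfix
  · intro x hx
    -- x fixed point; U_x = {m ∈ M | x ≤ m} is a fixed point of Ψ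
    have hx' : f x = x := hx
    set U : Set L := {m ∈ M | x ≤ m} with hU
    have hsInfU : sInf U = x := by
      obtain ⟨S, hSM, hS⟩ := hM x
      apply le_antisymm
      · calc sInf U ≤ sInf S := sInf_le_sInf (fun s hs => ⟨hSM hs, hS ▸ sInf_le hs⟩)
          _ = x := hS.symm
      · exact le_sInf fun m hm => hm.2
    have hUfix : U ∈ {U : Set L | U ⊆ M ∧ {m ∈ M | f (sInf U) ≤ m} = U} := by
      refine ⟨fun m hm => hm.1, ?_⟩
      rw [hsInfU, hx']
    have := hWleast hUfix
    calc x = sInf U := hsInfU.symm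
      _ ≤ sInf W := sInf_le_sInf this
end

section
/- Let L be a complete lattice, J ⊆ L a set that join-generates L, and suppose every element of J is completely join-prime (for every A ⊆ L, if j ≤ ⋁A then j ≤ a for some a ∈ A). Let f : L → L be monotone and let W be the least fixed point of the monotone operator Φ'_f on the power set of J given by Φ'_f(U) = { j ∈ J : there exists u ∈ L with j ≤ f(u) and every j' ∈ J with j' ≤ u belongs to U } (W is exactly the set of positions j ∈ J from which ∃ has a winning strategy in the alternative unfolding game G' in which infinite plays are won by ∀). Then ⋁W is the least fixed point of f. -/
/-- Let `L` be a complete lattice, `J ⊆ L` a join-generating set all of whose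
elements are completely join-prime, and `f : L → L` monotone. If `W` is the least fixed point
of the operator `Φ'_f(U) = { j ∈ J : ∃ u, j ≤ f u ∧ { j' ∈ J : j' ≤ u } ⊆ U }` on the power
set of `J`, then `⋁ W` is the least fixed point of `f`. -/
theorem sSup_lfp_of_alternative_unfolding_game {L : Type*} [CompleteLattice L] (J : Set L)
    (hJ : ∀ a : L, ∃ S ⊆ J, a = sSup S)
    (hprime : ∀ j ∈ J, ∀ A : Set L, j ≤ sSup A → ∃ a ∈ A, j ≤ a)
    (f : L → L) (hf : Monotone f) (W : Set L)
    (hW : IsLeast {U : Set L | U ⊆ J ∧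
      {j ∈ J | ∃ u : L, j ≤ f u ∧ ∀ j' ∈ J, j' ≤ u → j' ∈ U} = U} W) :
    IsLeast (Function.fixedPoints f) (sSup W) := by
  obtain ⟨⟨hWJ, hWfix⟩, hWleast⟩ := hW
  -- W is downward closed within J
  have hdown : ∀ j' ∈ J, ∀ w ∈ W, j' ≤ w → j' ∈ W := by
    intro j' hj' w hw hle
    have hw' : w ∈ {j ∈ J | ∃ u : L, j ≤ f u ∧ ∀ j'' ∈ J, j'' ≤ u → j'' ∈ W} := by
      rw [hWfix]; exact hw
    obtain ⟨_, u, hwfu, hu⟩ := hw'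
    have : j' ∈ {j ∈ J | ∃ u : L, j ≤ f u ∧ ∀ j'' ∈ J, j'' ≤ u → j'' ∈ W} :=
      ⟨hj', u, le_trans hle hwfu, hu⟩
    rwa [hWfix] at this
  -- sSup W ≤ f (sSup W)
  have h1 : sSup W ≤ f (sSup W) := by
    apply sSup_le
    intro j hj
    have hj' : j ∈ {j ∈ J | ∃ u : L, j ≤ f u ∧ ∀ j'' ∈ J, j'' ≤ u → j'' ∈ W} := by
      rw [hWfix]; exact hj
    obtain ⟨hjJ, u, hjfu, hu⟩ := hj'
    obtain ⟨S, hSJ, hSu⟩ := hJ u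
    have huW : u ≤ sSup W := by
      rw [hSu]
      apply sSup_le
      intro s hs
      exact le_sSup (hu s (hSJ hs) (hSu ▸ le_sSup hs))
    exact le_trans hjfu (hf huW)
  -- f (sSup W) ≤ sSup W
  have h2 : f (sSup W) ≤ sSup W := by
    obtain ⟨S, hSJ, hSf⟩ := hJ (f (sSup W))
    rw [hSf]
    apply sSup_le
    intro s hs
    have hsf : s ≤ f (sSup W) := hSf ▸ le_sSup hs
    have : s ∈ {j ∈ J | ∃ u : L, j ≤ f u ∧ ∀ j'' ∈ J, j'' ≤ u → j'' ∈ W} := by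
      refine ⟨hSJ hs, sSup W, hsf, ?_⟩
      intro j'' hj'' hle
      obtain ⟨w, hw, hj''w⟩ := hprime j'' hj'' W hle
      exact hdown j'' hj'' w hw hj''w
    rw [hWfix] at this
    exact le_sSup this
  constructor
  · exact le_antisymm h2 h1
  · intro x hx
    have hxfix : f x = x := hx
    have hU : W ⊆ {j ∈ J | j ≤ x} := by
      apply hWleast
      constructor
      · intro j hj; exact hj.1
      · ext j
        constructor
        · rintro ⟨hjJ, u, hjfu, hu⟩
          refine ⟨hjJ, ?_⟩
          obtain ⟨S, hSJ, hSu⟩ := hJ u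
          have hux : u ≤ x := by
            rw [hSu]
            apply sSup_le
            intro s hs
            exact (hu s (hSJ hs) (hSu ▸ le_sSup hs)).2
          calc j ≤ f u := hjfu
            _ ≤ f x := hf hux
            _ = x := hxfix
        · rintro ⟨hjJ, hjx⟩
          exact ⟨hjJ, x, hjx.trans_eq hxfix.symm, fun j' hj' hle => ⟨hj', hle⟩⟩
    exact sSup_le fun j hj => (hU hj).2
end

section
/- Let 𝕄 = ((G, M, I, R_□, R_◇), V) be a polarity-based model for the basic non-distributive modal logic, and let Win be the set of positions winning for ∃ in the evaluation game, defined as the least fixed point of the monotone operator F on sets of positions given by: an ∃-position is in F(W) iff some admissible move from it lies in W, and a ∀-position is in F(W) iff every admissible move from it lies in W (this corresponds to the game in which a player with no admissible move loses and infinite plays are won by ∀). Then for every formula φ of the basic non-distributive modal language and all g ∈ G, m ∈ M: (g, φ) ∈ Win if and only if 𝕄, g ⊩ φ, and (m, φ) ∈ Win if and only if 𝕄, m ⊁ φ. -/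
/-- Formulas of the basic non-distributive modal logic. -/
inductive NDForm (P : Type*) : Type _
  | bot : NDForm P
  | top : NDForm P
  | atom : P → NDForm P
  | and : NDForm P → NDForm P → NDForm P
  | or : NDForm P → NDForm P → NDForm P
  | box : NDForm P → NDForm P
  | dia : NDForm P → NDForm P

namespace NDForm

variable {P G M : Type*}

/-- The pair (extension, intension) interpreting a formula of the basic non-distributive
modal logic in a polarity-based model: `g ⊩ φ` iff `g ∈ (sem ... φ).1` and `m ≻ φ` iff
`m ∈ (sem ... φ).2`, following the recursive forcing clauses. -/
def sem (I : G → M → Prop) (Rbox : G → M → Prop) (Rdia : M → G → Prop)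
    (V : P → Concept G M I) : NDForm P → Set G × Set M
  | bot => ({g | ∀ m, I g m}, Set.univ)
  | top => (Set.univ, {m | ∀ g, I g m})
  | atom p => ((V p).extent, (V p).intent)
  | NDForm.and φ ψ =>
      ((sem I Rbox Rdia V φ).1 ∩ (sem I Rbox Rdia V ψ).1,
       {m | ∀ g ∈ (sem I Rbox Rdia V φ).1 ∩ (sem I Rbox Rdia V ψ).1, I g m})
  | NDForm.or φ ψ =>
      ({g | ∀ m ∈ (sem I Rbox Rdia V φ).2 ∩ (sem I Rbox Rdia V ψ).2, I g m},
       (sem I Rbox Rdia V φ).2 ∩ (sem I Rbox Rdia V ψ).2)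
  | box φ =>
      ({g | ∀ m ∈ (sem I Rbox Rdia V φ).2, Rbox g m},
       {m | ∀ g, (∀ m' ∈ (sem I Rbox Rdia V φ).2, Rbox g m') → I g m})
  | dia φ =>
      ({g | ∀ m, (∀ g' ∈ (sem I Rbox Rdia V φ).1, Rdia m g') → I g m},
       {m | ∀ g ∈ (sem I Rbox Rdia V φ).1, Rdia m g})

end NDForm

/-- Positions of the evaluation game: pairs `(g, φ)` (where `∀` moves) and
pairs `(m, φ)` (where `∃` moves). -/
inductive GamePos (G M P : Type*) : Type _
  | obj : G → NDForm P → GamePos G M P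
  | att : M → NDForm P → GamePos G M P

namespace GamePos

variable {P G M : Type*}

/-- The admissible moves of the evaluation game for basic non-distributive modal logic. -/
def moves (I : G → M → Prop) (Rbox : G → M → Prop) (Rdia : M → G → Prop)
    (V : P → Concept G M I) : GamePos G M P → Set (GamePos G M P)
  | obj g (NDForm.atom p) =>
      {q | g ∉ (V p).extent ∧ ∃ m, ¬ I g m ∧ q = att m (NDForm.atom p)}
  | att m (NDForm.atom p) =>
      {q | m ∉ (V p).intent ∧ ∃ g, ¬ I g m ∧ q = obj g (NDForm.atom p)}
  | obj _ NDForm.top => ∅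
  | att _ NDForm.bot => ∅
  | obj g NDForm.bot => {q | ∃ m, ¬ I g m ∧ q = att m NDForm.bot}
  | att m NDForm.top => {q | ∃ g, ¬ I g m ∧ q = obj g NDForm.top}
  | att m (NDForm.or φ ψ) => {att m φ, att m ψ}
  | obj g (NDForm.or φ ψ) => {q | ∃ m, ¬ I g m ∧ q = att m (NDForm.or φ ψ)}
  | obj g (NDForm.and φ ψ) => {obj g φ, obj g ψ}
  | att m (NDForm.and φ ψ) => {q | ∃ g, ¬ I g m ∧ q = obj g (NDForm.and φ ψ)}
  | att m (NDForm.dia φ) => {q | ∃ g, ¬ Rdia m g ∧ q = obj g φ}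
  | obj g (NDForm.dia φ) => {q | ∃ m, ¬ I g m ∧ q = att m (NDForm.dia φ)}
  | obj g (NDForm.box φ) => {q | ∃ m, ¬ Rbox g m ∧ q = att m φ}
  | att m (NDForm.box φ) => {q | ∃ g, ¬ I g m ∧ q = obj g (NDForm.box φ)}

/-- The one-step game operator `F`: an `∃`-position (of the form `(m, φ)`) belongs to `F W`
iff some admissible move from it lies in `W`; a `∀`-position (of the form `(g, φ)`) belongs
to `F W` iff every admissible move from it lies in `W`. -/
def gameOp (I : G → M → Prop) (Rbox : G → M → Prop) (Rdia : M → G → Prop)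
    (V : P → Concept G M I) (W : Set (GamePos G M P)) : Set (GamePos G M P) :=
  {p | match p with
    | obj g φ => ∀ q ∈ moves I Rbox Rdia V (obj g φ), q ∈ W
    | att m φ => ∃ q ∈ moves I Rbox Rdia V (att m φ), q ∈ W}

end GamePos

/-!
The positions `(g, φ)` with `g ⊩ φ` and `(m, φ)` with `m ⊁ φ` form a fixed point of the game
operator: each forcing clause is the winning condition at the corresponding position, except at
atoms, where one uses that `V p` is a concept, so that `g ∉ ⟦V p⟧` is witnessed by
some `m ∈ ⦃V p⦄` with `g I^c m`. This fixed point is also below every prefixed point, by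
induction on `φ`; hence it is the least fixed point.
-/

namespace Concept

variable {α β : Type*} {r : α → β → Prop} (c : Concept α β r)

theorem exists_mem_intent_not_of_notMem_extent {a : α} (h : a ∉ c.extent) :
    ∃ b ∈ c.intent, ¬ r a b := by
  rw [← c.lowerPolar_intent, mem_lowerPolar_iff] at h
  push Not at h
  exact h

theorem exists_mem_extent_not_of_notMem_intent {b : β} (h : b ∉ c.intent) :
    ∃ a ∈ c.extent, ¬ r a b := by
  rw [← c.upperPolar_extent, mem_upperPolar_iff] at h
  push Not at h
  exact h

end Concept

namespace GamePos

variable {P G M : Type*} {I : G → M → Prop} {Rbox : G → M → Prop} {Rdia : M → G → Prop}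
  {V : P → Concept G M I}

variable (I Rbox Rdia V) in
def semWin : Set (GamePos G M P) :=
  {p | match p with
    | obj g φ => g ∈ (NDForm.sem I Rbox Rdia V φ).1
    | att m φ => m ∉ (NDForm.sem I Rbox Rdia V φ).2}

@[simp] theorem obj_mem_semWin {g : G} {φ : NDForm P} :
    obj g φ ∈ semWin I Rbox Rdia V ↔ g ∈ (NDForm.sem I Rbox Rdia V φ).1 := .rfl

@[simp] theorem att_mem_semWin {m : M} {φ : NDForm P} :
    att m φ ∈ semWin I Rbox Rdia V ↔ m ∉ (NDForm.sem I Rbox Rdia V φ).2 := .rfl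

@[simp] theorem obj_mem_gameOp {W : Set (GamePos G M P)} {g : G} {φ : NDForm P} :
    obj g φ ∈ gameOp I Rbox Rdia V W ↔ ∀ q ∈ moves I Rbox Rdia V (obj g φ), q ∈ W :=
  .rfl

@[simp] theorem att_mem_gameOp {W : Set (GamePos G M P)} {m : M} {φ : NDForm P} :
    att m φ ∈ gameOp I Rbox Rdia V W ↔ ∃ q ∈ moves I Rbox Rdia V (att m φ), q ∈ W :=
  .rfl

theorem mem_gameOp_of_forall_moves {A B : Set (GamePos G M P)} {p : GamePos G M P}
    (hp : p ∈ gameOp I Rbox Rdia V A)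
    (hAB : ∀ q ∈ moves I Rbox Rdia V p, q ∈ A → q ∈ B) :
    p ∈ gameOp I Rbox Rdia V B := by
  cases p with
  | obj g φ => exact fun q hq => hAB q hq (hp q hq)
  | att m φ =>
    obtain ⟨q, hq, hqA⟩ := hp
    exact ⟨q, hq, hAB q hq hqA⟩

theorem obj_mem_gameOp_semWin {g : G} {φ : NDForm P} :
    obj g φ ∈ gameOp I Rbox Rdia V (semWin I Rbox Rdia V) ↔
      g ∈ (NDForm.sem I Rbox Rdia V φ).1 := by
  cases φ with
  | bot =>
    exact ⟨fun h m => by_contra fun hI => h _ ⟨m, hI, rfl⟩ trivial,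
      fun h _ ⟨m, hI, _⟩ => absurd (h m) hI⟩
  | top => simp [moves, NDForm.sem]
  | atom p =>
    refine ⟨fun h => by_contra fun hg => ?_, fun hg _ ⟨hg', _⟩ => absurd hg hg'⟩
    obtain ⟨m, hm, hI⟩ := (V p).exists_mem_intent_not_of_notMem_extent hg
    exact h _ ⟨hg, m, hI, rfl⟩ hm
  | and φ ψ =>
    refine ⟨fun h => ⟨h _ (.inl rfl), h _ (.inr rfl)⟩, ?_⟩
    rintro ⟨hφ, hψ⟩ _ (rfl | rfl)
    exacts [hφ, hψ]
  | or _ _ | box _ | dia _ =>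
    refine ⟨fun h m hm => by_contra fun hI => h _ ⟨m, hI, rfl⟩ hm, ?_⟩
    rintro h _ ⟨m, hI, rfl⟩ hm
    exact hI (h m hm)

theorem att_mem_gameOp_semWin {m : M} {φ : NDForm P} :
    att m φ ∈ gameOp I Rbox Rdia V (semWin I Rbox Rdia V) ↔
      m ∉ (NDForm.sem I Rbox Rdia V φ).2 := by
  cases φ with
  | atom p =>
    refine ⟨fun ⟨_, ⟨hm, _⟩, _⟩ => hm, fun hm => ?_⟩
    obtain ⟨g, hg, hI⟩ := (V p).exists_mem_extent_not_of_notMem_intent hm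
    exact ⟨_, ⟨hm, g, hI, rfl⟩, hg⟩
  | _ => simp [moves, NDForm.sem] <;> grind

theorem gameOp_semWin : gameOp I Rbox Rdia V (semWin I Rbox Rdia V) = semWin I Rbox Rdia V := by
  ext (⟨g, φ⟩ | ⟨m, φ⟩)
  exacts [obj_mem_gameOp_semWin, att_mem_gameOp_semWin]

theorem mem_of_mem_semWin_of_moves {W : Set (GamePos G M P)} (hW : gameOp I Rbox Rdia V W ⊆ W)
    {p : GamePos G M P} (hp : p ∈ semWin I Rbox Rdia V)
    (h : ∀ q ∈ moves I Rbox Rdia V p, q ∈ semWin I Rbox Rdia V → q ∈ W) : p ∈ W :=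
  hW (mem_gameOp_of_forall_moves (gameOp_semWin.symm ▸ hp) h)

theorem obj_att_mem_of_mem_semWin {W : Set (GamePos G M P)}
    (hW : gameOp I Rbox Rdia V W ⊆ W) (φ : NDForm P) :
    (∀ g, obj g φ ∈ semWin I Rbox Rdia V → obj g φ ∈ W) ∧
      (∀ m, att m φ ∈ semWin I Rbox Rdia V → att m φ ∈ W) := by
  have step {p} := mem_of_mem_semWin_of_moves (p := p) hW
  -- At each formula, moves from one sort of winning position only reach subformulas, while
  -- those from the other sort stay at the formula and switch sort: the former is treated first.
  induction φ with
  | bot =>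
    have hatt m (hm : att m NDForm.bot ∈ semWin I Rbox Rdia V) : att m NDForm.bot ∈ W :=
      step hm fun _ hq => hq.elim
    exact ⟨fun g hg => step hg fun _ ⟨m, _, hq⟩ => hq ▸ hatt m, hatt⟩
  | top =>
    have hobj g (hg : obj g NDForm.top ∈ semWin I Rbox Rdia V) : obj g NDForm.top ∈ W :=
      step hg fun _ hq => hq.elim
    exact ⟨hobj, fun m hm => step hm fun _ ⟨g, _, hq⟩ => hq ▸ hobj g⟩
  | atom a =>
    have hobj g (hg : obj g (.atom a) ∈ semWin I Rbox Rdia V) : obj g (.atom a) ∈ W :=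
      step hg fun _ ⟨hg', _⟩ => absurd hg hg'
    exact ⟨hobj, fun m hm => step hm fun _ ⟨_, g, _, hq⟩ => hq ▸ hobj g⟩
  | and φ ψ ihφ ihψ =>
    have hobj g (hg : obj g (φ.and ψ) ∈ semWin I Rbox Rdia V) : obj g (φ.and ψ) ∈ W :=
      step hg fun _ hq => hq.elim (· ▸ ihφ.1 g) (· ▸ ihψ.1 g)
    exact ⟨hobj, fun m hm => step hm fun _ ⟨g, _, hq⟩ => hq ▸ hobj g⟩
  | or φ ψ ihφ ihψ =>
    have hatt m (hm : att m (φ.or ψ) ∈ semWin I Rbox Rdia V) : att m (φ.or ψ) ∈ W :=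
      step hm fun _ hq => hq.elim (· ▸ ihφ.2 m) (· ▸ ihψ.2 m)
    exact ⟨fun g hg => step hg fun _ ⟨m, _, hq⟩ => hq ▸ hatt m, hatt⟩
  | box φ ih =>
    have hobj g (hg : obj g φ.box ∈ semWin I Rbox Rdia V) : obj g φ.box ∈ W :=
      step hg fun _ ⟨m, _, hq⟩ => hq ▸ ih.2 m
    exact ⟨hobj, fun m hm => step hm fun _ ⟨g, _, hq⟩ => hq ▸ hobj g⟩
  | dia φ ih =>
    have hatt m (hm : att m φ.dia ∈ semWin I Rbox Rdia V) : att m φ.dia ∈ W :=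
      step hm fun _ ⟨g, _, hq⟩ => hq ▸ ih.1 g
    exact ⟨fun g hg => step hg fun _ ⟨m, _, hq⟩ => hq ▸ hatt m, hatt⟩

theorem semWin_subset {W : Set (GamePos G M P)} (hW : gameOp I Rbox Rdia V W ⊆ W) :
    semWin I Rbox Rdia V ⊆ W := by
  rintro (⟨g, φ⟩ | ⟨m, φ⟩)
  exacts [(obj_att_mem_of_mem_semWin hW φ).1 g, (obj_att_mem_of_mem_semWin hW φ).2 m]

theorem isLeast_semWin :
    IsLeast {W | gameOp I Rbox Rdia V W = W} (semWin I Rbox Rdia V) :=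
  ⟨gameOp_semWin, fun _ hW => semWin_subset hW.le⟩

end GamePos

theorem game_semantics_adequacy_general {P G M : Type*}
    (I : G → M → Prop) (Rbox : G → M → Prop) (Rdia : M → G → Prop)
    (V : P → Concept G M I) (Win : Set (GamePos G M P))
    (hWin : IsLeast {W | GamePos.gameOp I Rbox Rdia V W = W} Win) :
    ∀ φ : NDForm P,
      (∀ g : G, GamePos.obj g φ ∈ Win ↔ g ∈ (NDForm.sem I Rbox Rdia V φ).1) ∧
      (∀ m : M, GamePos.att m φ ∈ Win ↔ m ∉ (NDForm.sem I Rbox Rdia V φ).2) := by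
  obtain rfl : Win = GamePos.semWin I Rbox Rdia V := hWin.unique GamePos.isLeast_semWin
  exact fun φ => ⟨fun g => Iff.rfl, fun m => Iff.rfl⟩

/-- In a polarity-based model for the basic non-distributive modal logic,
let `Win` be the least fixed point of the monotone game operator. Then for every formula
`φ`: `(g, φ) ∈ Win` iff `g ⊩ φ`, and `(m, φ) ∈ Win` iff `m ⊁ φ`. -/
theorem game_semantics_adequacy {P G M : Type*}
    (I : G → M → Prop) (Rbox : G → M → Prop) (Rdia : M → G → Prop)
    (hcompBox0 : ∀ m : M,
      lowerPolar I (upperPolar I (lowerPolar Rbox {m})) = lowerPolar Rbox {m})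
    (hcompBox1 : ∀ g : G,
      upperPolar I (lowerPolar I (upperPolar Rbox {g})) = upperPolar Rbox {g})
    (hcompDia0 : ∀ g : G,
      upperPolar I (lowerPolar I (lowerPolar Rdia {g})) = lowerPolar Rdia {g})
    (hcompDia1 : ∀ m : M,
      lowerPolar I (upperPolar I (upperPolar Rdia {m})) = upperPolar Rdia {m})
    (V : P → Concept G M I) (Win : Set (GamePos G M P))
    (hWin : IsLeast {W | GamePos.gameOp I Rbox Rdia V W = W} Win) :
    ∀ φ : NDForm P,
      (∀ g : G, GamePos.obj g φ ∈ Win ↔ g ∈ (NDForm.sem I Rbox Rdia V φ).1) ∧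
      (∀ m : M, GamePos.att m φ ∈ Win ↔ m ∉ (NDForm.sem I Rbox Rdia V φ).2) :=
  game_semantics_adequacy_general I Rbox Rdia V Win hWin
end

section
/- Let 𝕄₁ = ((G₁, M₁, I₁, R_□₁, R_◇₁), V₁) and 𝕄₂ = ((G₂, M₂, I₂, R_□₂, R_◇₂), V₂) be polarity-based models for the non-distributive modal μ-calculus, and let (S, T) be a simulation from 𝕄₁ to 𝕄₂. Then for every formula φ of the non-distributive modal μ-calculus all of whose variables are bound: (1) for all g₁ ∈ G₁, g₂ ∈ G₂, if g₁ S g₂ and 𝕄₁, g₁ ⊩ φ, then 𝕄₂, g₂ ⊩ φ; and (2) for all m₁ ∈ M₁, m₂ ∈ M₂, if m₁ T m₂ and 𝕄₂, m₂ ≻ φ, then 𝕄₁, m₁ ≻ φ. -/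
/-- Formulas of the non-distributive modal μ-calculus, with atoms in `P` and
(fixed-point) variables in `Var`. -/
inductive MuForm (P Var : Type*) : Type _
  | atom : P → MuForm P Var
  | var : Var → MuForm P Var
  | bot : MuForm P Var
  | top : MuForm P Var
  | or : MuForm P Var → MuForm P Var → MuForm P Var
  | and : MuForm P Var → MuForm P Var → MuForm P Var
  | box : MuForm P Var → MuForm P Var
  | dia : MuForm P Var → MuForm P Var
  | mu : Var → MuForm P Var → MuForm P Var
  | nu : Var → MuForm P Var → MuForm P Var

variable {P Var G M : Type*}

/-- Galois-stability of `R_□^{(0)}[Y]` for arbitrary `Y ⊆ M`, from `I`-compatibility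
of `R_□` on singletons. -/
theorem stable_extentClosure_box (I : G → M → Prop) (R : G → M → Prop)
    (h : ∀ m : M,
      lowerPolar I (upperPolar I (lowerPolar R {m})) = lowerPolar R {m})
    (Y : Set M) :
    lowerPolar I (upperPolar I (lowerPolar R Y)) = lowerPolar R Y := by
  apply subset_antisymm
  · intro g hg m hm
    have h1 : lowerPolar R Y ⊆ lowerPolar R ({m} : Set M) := by
      intro g' hg' m' hm'
      rcases hm' with rfl
      exact hg' hm
    have h2 := lowerPolar_anti I (upperPolar_anti I h1)
    rw [h m] at h2
    exact h2 hg rfl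
  · exact subset_lowerPolar_upperPolar I _

/-- Galois-stability of `R_◇^{(0)}[B]` for arbitrary `B ⊆ G`, from `I`-compatibility
of `R_◇` on singletons. -/
theorem stable_extentClosure_dia (I : G → M → Prop) (R : M → G → Prop)
    (h : ∀ g : G,
      upperPolar I (lowerPolar I (lowerPolar R {g})) = lowerPolar R {g})
    (B : Set G) :
    upperPolar I (lowerPolar I (lowerPolar R B)) = lowerPolar R B := by
  apply subset_antisymm
  · intro m hm g hg
    have h1 : lowerPolar R B ⊆ lowerPolar R ({g} : Set G) := by
      intro m' hm' g' hg'
      rcases hg' with rfl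
      exact hm' hg
    have h2 := upperPolar_anti I (lowerPolar_anti I h1)
    rw [h g] at h2
    exact h2 hm rfl
  · exact subset_upperPolar_lowerPolar I _

/-- The box operation `[R_□]c = (R_□^{(0)}[⦃c⦄], (R_□^{(0)}[⦃c⦄])^↑)` on the concept
lattice of an enriched formal context. -/
def boxConcept (I : G → M → Prop) (R : G → M → Prop)
    (h : ∀ m : M,
      lowerPolar I (upperPolar I (lowerPolar R {m})) = lowerPolar R {m})
    (c : Concept G M I) : Concept G M I where
  extent := lowerPolar R c.intent
  intent := upperPolar I (lowerPolar R c.intent)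
  upperPolar_extent := rfl
  lowerPolar_intent := stable_extentClosure_box I R h c.intent

/-- The diamond operation `⟨R_◇⟩c = ((R_◇^{(0)}[⟦c⟧])^↓, R_◇^{(0)}[⟦c⟧])` on the concept
lattice of an enriched formal context. -/
def diaConcept (I : G → M → Prop) (R : M → G → Prop)
    (h : ∀ g : G,
      upperPolar I (lowerPolar I (lowerPolar R {g})) = lowerPolar R {g})
    (c : Concept G M I) : Concept G M I where
  extent := lowerPolar I (lowerPolar R c.extent)
  intent := lowerPolar R c.extent
  upperPolar_extent := stable_extentClosure_dia I R h c.extent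
  lowerPolar_intent := rfl

/-- The interpretation of a μ-calculus formula as a formal concept, given a valuation `V`
of the atoms and an assignment `A` of the variables. Fixed points are given by their
Knaster–Tarski descriptions `μz.φ = ⋀{c : ⟦φ⟧_{A[z↦c]} ≤ c}` and
`νz.φ = ⋁{c : c ≤ ⟦φ⟧_{A[z↦c]}}`. -/
def MuForm.sem [DecidableEq Var] (I : G → M → Prop) (Rbox : G → M → Prop)
    (Rdia : M → G → Prop)
    (hbox : ∀ m : M,
      lowerPolar I (upperPolar I (lowerPolar Rbox {m})) = lowerPolar Rbox {m})
    (hdia : ∀ g : G,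
      upperPolar I (lowerPolar I (lowerPolar Rdia {g})) = lowerPolar Rdia {g})
    (V : P → Concept G M I) :
    MuForm P Var → (Var → Concept G M I) → Concept G M I
  | atom p, _ => V p
  | var v, A => A v
  | bot, _ => ⊥
  | top, _ => ⊤
  | MuForm.or φ ψ, A => sem I Rbox Rdia hbox hdia V φ A ⊔ sem I Rbox Rdia hbox hdia V ψ A
  | MuForm.and φ ψ, A => sem I Rbox Rdia hbox hdia V φ A ⊓ sem I Rbox Rdia hbox hdia V ψ A
  | box φ, A => boxConcept I Rbox hbox (sem I Rbox Rdia hbox hdia V φ A)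
  | dia φ, A => diaConcept I Rdia hdia (sem I Rbox Rdia hbox hdia V φ A)
  | mu v φ, A =>
      sInf {c | sem I Rbox Rdia hbox hdia V φ (Function.update A v c) ≤ c}
  | nu v φ, A =>
      sSup {c | c ≤ sem I Rbox Rdia hbox hdia V φ (Function.update A v c)}

/-- The set of free variables of a μ-calculus formula. -/
def MuForm.freeVars : MuForm P Var → Set Var
  | atom _ => ∅
  | var v => {v}
  | bot => ∅
  | top => ∅
  | MuForm.or φ ψ => freeVars φ ∪ freeVars ψ
  | MuForm.and φ ψ => freeVars φ ∪ freeVars ψ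
  | box φ => freeVars φ
  | dia φ => freeVars φ
  | mu v φ => freeVars φ \ {v}
  | nu v φ => freeVars φ \ {v}

/-- A simulation from the polarity-based model `((G₁,M₁,I₁,Rb₁,Rd₁),V₁)` to the
polarity-based model `((G₂,M₂,I₂,Rb₂,Rd₂),V₂)`: a pair of relations `(S, T)` satisfying
conditions (1)–(6) of Definition 5.1. -/
def IsSimulation {P G₁ M₁ G₂ M₂ : Type*}
    (I₁ : G₁ → M₁ → Prop) (Rb₁ : G₁ → M₁ → Prop) (Rd₁ : M₁ → G₁ → Prop)
    (V₁ : P → Concept G₁ M₁ I₁)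
    (I₂ : G₂ → M₂ → Prop) (Rb₂ : G₂ → M₂ → Prop) (Rd₂ : M₂ → G₂ → Prop)
    (V₂ : P → Concept G₂ M₂ I₂)
    (S : G₁ → G₂ → Prop) (T : M₁ → M₂ → Prop) : Prop :=
  (∀ p : P, ∀ g₁ g₂, S g₁ g₂ → g₁ ∈ (V₁ p).extent → g₂ ∈ (V₂ p).extent) ∧
  (∀ p : P, ∀ m₁ m₂, T m₁ m₂ → m₂ ∈ (V₂ p).intent → m₁ ∈ (V₁ p).intent) ∧
  (∀ g₁ g₂ m₂, S g₁ g₂ → ¬ I₂ g₂ m₂ → ∃ m₁, ¬ I₁ g₁ m₁ ∧ T m₁ m₂) ∧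
  (∀ m₁ m₂ g₁, T m₁ m₂ → ¬ I₁ g₁ m₁ → ∃ g₂, ¬ I₂ g₂ m₂ ∧ S g₁ g₂) ∧
  (∀ g₁ g₂ m₂, S g₁ g₂ → ¬ Rb₂ g₂ m₂ → ∃ m₁, ¬ Rb₁ g₁ m₁ ∧ T m₁ m₂) ∧
  (∀ m₁ m₂ g₁, T m₁ m₂ → ¬ Rd₁ m₁ g₁ → ∃ g₂, ¬ Rd₂ m₂ g₂ ∧ S g₁ g₂)

/-!
Taking the concept generated by the `S`-image of an extent, and dually by the `T`-preimage of an
intent, gives two maps between the concept lattices which conditions (3) and (4) make a Galois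
connection. Both halves of the theorem then say that the image of `⟦φ⟧₁` lies below `⟦φ⟧₂`,
which is proved by induction on `φ`: joins and `⊥` are preserved by a left adjoint, the modalities
are exactly conditions (5) and (6), and an inequality `l ∘ F₁ ≤ F₂ ∘ l` passes to greatest fixed
points for any `l` and to least fixed points when `l` has a right adjoint.
-/

theorem GaloisConnection.l_lfp_le_lfp {α β : Type*} [CompleteLattice α] [CompleteLattice β]
    {l : α → β} {u : β → α} (gc : GaloisConnection l u) {f : α →o α} {g : β →o β}
    (h : ∀ a b, l a ≤ b → l (f a) ≤ g b) : l f.lfp ≤ g.lfp :=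
  gc.l_le <| f.lfp_le <| gc.le_u <| (h _ _ (gc.l_u_le _)).trans g.map_lfp.le

theorem OrderHom.apply_gfp_le_gfp {α β : Type*} [CompleteLattice α] [CompleteLattice β]
    (l : α → β) {f : α →o α} {g : β →o β} (h : ∀ a b, l a ≤ b → l (f a) ≤ g b) :
    l f.gfp ≤ g.gfp :=
  g.le_gfp <| f.map_gfp ▸ h _ _ (f.map_gfp.symm ▸ le_rfl)

theorem Function.update_rel_update {ι α β : Type*} [DecidableEq ι] {R : α → β → Prop}
    {f : ι → α} {g : ι → β} {s : Set ι} {i : ι} {a : α} {b : β}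
    (hfg : ∀ j ∈ s \ {i}, R (f j) (g j)) (hab : R a b) :
    ∀ j ∈ s, R (update f i a j) (update g i b j) := by
  intro j hj
  rcases eq_or_ne j i with rfl | hji
  · simpa using hab
  · simpa [update_of_ne hji] using hfg j ⟨hj, hji⟩

namespace Concept

variable {G₁ M₁ G₂ M₂ : Type*}

def image {I₁ : G₁ → M₁ → Prop} (I₂ : G₂ → M₂ → Prop) (S : G₁ → G₂ → Prop)
    (c : Concept G₁ M₁ I₁) : Concept G₂ M₂ I₂ :=
  ofObjects I₂ {g₂ | ∃ g₁ ∈ c.extent, S g₁ g₂}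

def preimage (I₁ : G₁ → M₁ → Prop) {I₂ : G₂ → M₂ → Prop} (T : M₁ → M₂ → Prop)
    (c : Concept G₂ M₂ I₂) : Concept G₁ M₁ I₁ :=
  ofAttributes I₁ {m₁ | ∃ m₂ ∈ c.intent, T m₁ m₂}

variable {I₁ : G₁ → M₁ → Prop} {I₂ : G₂ → M₂ → Prop} {S : G₁ → G₂ → Prop} {T : M₁ → M₂ → Prop}

theorem image_le_iff {c₁ : Concept G₁ M₁ I₁} {c₂ : Concept G₂ M₂ I₂} :
    image I₂ S c₁ ≤ c₂ ↔ ∀ g₁ g₂, S g₁ g₂ → g₁ ∈ c₁.extent → g₂ ∈ c₂.extent := by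
  simp only [image, ofObjects_le_iff, Set.ofPred_subset, forall_exists_index, and_imp]
  grind

theorem le_preimage_iff {c₁ : Concept G₁ M₁ I₁} {c₂ : Concept G₂ M₂ I₂} :
    c₁ ≤ preimage I₁ T c₂ ↔ ∀ m₁ m₂, T m₁ m₂ → m₂ ∈ c₂.intent → m₁ ∈ c₁.intent := by
  simp only [preimage, le_ofAttributes_iff, Set.ofPred_subset, forall_exists_index, and_imp]
  grind

theorem gc_image_preimage
    (h₃ : ∀ g₁ g₂ m₂, S g₁ g₂ → ¬ I₂ g₂ m₂ → ∃ m₁, ¬ I₁ g₁ m₁ ∧ T m₁ m₂)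
    (h₄ : ∀ m₁ m₂ g₁, T m₁ m₂ → ¬ I₁ g₁ m₁ → ∃ g₂, ¬ I₂ g₂ m₂ ∧ S g₁ g₂) :
    GaloisConnection (image I₂ S) (preimage I₁ T) := by
  intro c₁ c₂
  rw [image_le_iff, le_preimage_iff]
  constructor
  · intro h m₁ m₂ hT hm₂
    rw [← c₁.upperPolar_extent]
    intro g₁ hg₁
    by_contra hI
    obtain ⟨g₂, hI₂, hS⟩ := h₄ m₁ m₂ g₁ hT hI
    exact hI₂ (rel_extent_intent (h g₁ g₂ hS hg₁) hm₂)
  · intro h g₁ g₂ hS hg₁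
    rw [← c₂.lowerPolar_intent]
    intro m₂ hm₂
    by_contra hI
    obtain ⟨m₁, hI₁, hT⟩ := h₃ g₁ g₂ m₂ hS hI
    exact hI₁ (rel_extent_intent hg₁ (h m₁ m₂ hT hm₂))

end Concept

theorem IsSimulation.gc_image_preimage {G₁ M₁ G₂ M₂ : Type*}
    {I₁ : G₁ → M₁ → Prop} {Rb₁ : G₁ → M₁ → Prop} {Rd₁ : M₁ → G₁ → Prop}
    {V₁ : P → Concept G₁ M₁ I₁}
    {I₂ : G₂ → M₂ → Prop} {Rb₂ : G₂ → M₂ → Prop} {Rd₂ : M₂ → G₂ → Prop}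
    {V₂ : P → Concept G₂ M₂ I₂} {S : G₁ → G₂ → Prop} {T : M₁ → M₂ → Prop}
    (hsim : IsSimulation I₁ Rb₁ Rd₁ V₁ I₂ Rb₂ Rd₂ V₂ S T) :
    GaloisConnection (Concept.image I₂ S) (Concept.preimage I₁ T) :=
  Concept.gc_image_preimage hsim.2.2.1 hsim.2.2.2.1

section Modalities

variable {I : G → M → Prop}

theorem boxConcept_mono (R : G → M → Prop)
    (h : ∀ m : M, lowerPolar I (upperPolar I (lowerPolar R {m})) = lowerPolar R {m}) :
    Monotone (boxConcept I R h) := fun _ _ hcd =>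
  Concept.extent_subset_extent_iff.1 <| lowerPolar_anti R <| Concept.intent_subset_intent_iff.2 hcd

theorem diaConcept_mono (R : M → G → Prop)
    (h : ∀ g : G, upperPolar I (lowerPolar I (lowerPolar R {g})) = lowerPolar R {g}) :
    Monotone (diaConcept I R h) := fun _ _ hcd =>
  Concept.intent_subset_intent_iff.1 <| lowerPolar_anti R <| Concept.extent_subset_extent_iff.2 hcd

variable {G₁ M₁ G₂ M₂ : Type*} {I₁ : G₁ → M₁ → Prop} {I₂ : G₂ → M₂ → Prop}
  {S : G₁ → G₂ → Prop} {T : M₁ → M₂ → Prop}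

theorem image_boxConcept_le {R₁ : G₁ → M₁ → Prop} {R₂ : G₂ → M₂ → Prop}
    (h₁ : ∀ m : M₁, lowerPolar I₁ (upperPolar I₁ (lowerPolar R₁ {m})) = lowerPolar R₁ {m})
    (h₂ : ∀ m : M₂, lowerPolar I₂ (upperPolar I₂ (lowerPolar R₂ {m})) = lowerPolar R₂ {m})
    (h₅ : ∀ g₁ g₂ m₂, S g₁ g₂ → ¬ R₂ g₂ m₂ → ∃ m₁, ¬ R₁ g₁ m₁ ∧ T m₁ m₂)
    {c₁ : Concept G₁ M₁ I₁} {c₂ : Concept G₂ M₂ I₂} (hc : c₁ ≤ Concept.preimage I₁ T c₂) :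
    Concept.image I₂ S (boxConcept I₁ R₁ h₁ c₁) ≤ boxConcept I₂ R₂ h₂ c₂ := by
  rw [Concept.le_preimage_iff] at hc
  rw [Concept.image_le_iff]
  intro g₁ g₂ hS hg₁ m₂ hm₂
  by_contra hR
  obtain ⟨m₁, hR₁, hT⟩ := h₅ g₁ g₂ m₂ hS hR
  exact hR₁ (hg₁ (hc m₁ m₂ hT hm₂))

theorem diaConcept_le_preimage {R₁ : M₁ → G₁ → Prop} {R₂ : M₂ → G₂ → Prop}
    (h₁ : ∀ g : G₁, upperPolar I₁ (lowerPolar I₁ (lowerPolar R₁ {g})) = lowerPolar R₁ {g})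
    (h₂ : ∀ g : G₂, upperPolar I₂ (lowerPolar I₂ (lowerPolar R₂ {g})) = lowerPolar R₂ {g})
    (h₆ : ∀ m₁ m₂ g₁, T m₁ m₂ → ¬ R₁ m₁ g₁ → ∃ g₂, ¬ R₂ m₂ g₂ ∧ S g₁ g₂)
    {c₁ : Concept G₁ M₁ I₁} {c₂ : Concept G₂ M₂ I₂} (hc : Concept.image I₂ S c₁ ≤ c₂) :
    diaConcept I₁ R₁ h₁ c₁ ≤ Concept.preimage I₁ T (diaConcept I₂ R₂ h₂ c₂) := by
  rw [Concept.image_le_iff] at hc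
  rw [Concept.le_preimage_iff]
  intro m₁ m₂ hT hm₂ g₁ hg₁
  by_contra hR
  obtain ⟨g₂, hR₂, hS⟩ := h₆ m₁ m₂ g₁ hT hR
  exact hR₂ (hm₂ (hc g₁ g₂ hS hg₁))

end Modalities

namespace MuForm

section Semantics

variable [DecidableEq Var] (I : G → M → Prop) (Rbox : G → M → Prop)
  (Rdia : M → G → Prop)
  (hbox : ∀ m : M, lowerPolar I (upperPolar I (lowerPolar Rbox {m})) = lowerPolar Rbox {m})
  (hdia : ∀ g : G, upperPolar I (lowerPolar I (lowerPolar Rdia {g})) = lowerPolar Rdia {g})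
  (V : P → Concept G M I)

theorem sem_mono (φ : MuForm P Var) : Monotone (φ.sem I Rbox Rdia hbox hdia V) := by
  induction φ with
  | atom | bot | top => exact fun _ _ _ => le_rfl
  | var v => exact fun _ _ h => h v
  | or φ ψ ihφ ihψ => exact fun _ _ h => sup_le_sup (ihφ h) (ihψ h)
  | and φ ψ ihφ ihψ => exact fun _ _ h => inf_le_inf (ihφ h) (ihψ h)
  | box φ ih => exact fun _ _ h => boxConcept_mono Rbox hbox (ih h)
  | dia φ ih => exact fun _ _ h => diaConcept_mono Rdia hdia (ih h)
  | mu v φ ih =>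
    exact fun _ _ h => sInf_le_sInf fun c hc =>
      (ih (update_le_update_iff.2 ⟨le_rfl, fun j _ => h j⟩)).trans hc
  | nu v φ ih =>
    exact fun _ _ h => sSup_le_sSup fun c hc =>
      hc.trans (ih (update_le_update_iff.2 ⟨le_rfl, fun j _ => h j⟩))

def semUpdate (φ : MuForm P Var) (A : Var → Concept G M I) (v : Var) :
    Concept G M I →o Concept G M I where
  toFun c := φ.sem I Rbox Rdia hbox hdia V (Function.update A v c)
  monotone' := (sem_mono I Rbox Rdia hbox hdia V φ).comp Function.update_mono

theorem sem_mu (φ : MuForm P Var) (A : Var → Concept G M I) (v : Var) :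
    (mu v φ).sem I Rbox Rdia hbox hdia V A = (φ.semUpdate I Rbox Rdia hbox hdia V A v).lfp :=
  rfl

theorem sem_nu (φ : MuForm P Var) (A : Var → Concept G M I) (v : Var) :
    (nu v φ).sem I Rbox Rdia hbox hdia V A = (φ.semUpdate I Rbox Rdia hbox hdia V A v).gfp :=
  rfl

end Semantics

variable [DecidableEq Var] {G₁ M₁ G₂ M₂ : Type*}
  {I₁ : G₁ → M₁ → Prop} {Rb₁ : G₁ → M₁ → Prop} {Rd₁ : M₁ → G₁ → Prop}
  {hb₁ : ∀ m : M₁, lowerPolar I₁ (upperPolar I₁ (lowerPolar Rb₁ {m})) = lowerPolar Rb₁ {m}}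
  {hd₁ : ∀ g : G₁, upperPolar I₁ (lowerPolar I₁ (lowerPolar Rd₁ {g})) = lowerPolar Rd₁ {g}}
  {V₁ : P → Concept G₁ M₁ I₁}
  {I₂ : G₂ → M₂ → Prop} {Rb₂ : G₂ → M₂ → Prop} {Rd₂ : M₂ → G₂ → Prop}
  {hb₂ : ∀ m : M₂, lowerPolar I₂ (upperPolar I₂ (lowerPolar Rb₂ {m})) = lowerPolar Rb₂ {m}}
  {hd₂ : ∀ g : G₂, upperPolar I₂ (lowerPolar I₂ (lowerPolar Rd₂ {g})) = lowerPolar Rd₂ {g}}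
  {V₂ : P → Concept G₂ M₂ I₂}
  {S : G₁ → G₂ → Prop} {T : M₁ → M₂ → Prop}

theorem image_sem_le (hsim : IsSimulation I₁ Rb₁ Rd₁ V₁ I₂ Rb₂ Rd₂ V₂ S T) (φ : MuForm P Var)
    {A₁ : Var → Concept G₁ M₁ I₁} {A₂ : Var → Concept G₂ M₂ I₂}
    (hA : ∀ v ∈ φ.freeVars, Concept.image I₂ S (A₁ v) ≤ A₂ v) :
    Concept.image I₂ S (φ.sem I₁ Rb₁ Rd₁ hb₁ hd₁ V₁ A₁) ≤ φ.sem I₂ Rb₂ Rd₂ hb₂ hd₂ V₂ A₂ := by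
  have gc := hsim.gc_image_preimage
  obtain ⟨h₁, -, -, -, h₅, h₆⟩ := hsim
  induction φ generalizing A₁ A₂ with
  | atom p => exact Concept.image_le_iff.2 (h₁ p)
  | var v => exact hA v rfl
  | bot => exact gc.l_bot.le
  | top => exact le_top
  | or φ ψ ihφ ihψ =>
    exact gc.l_sup.trans_le <|
      sup_le_sup (ihφ fun v hv => hA v (.inl hv)) (ihψ fun v hv => hA v (.inr hv))
  | and φ ψ ihφ ihψ =>
    exact (gc.monotone_l.map_inf_le _ _).trans <|
      inf_le_inf (ihφ fun v hv => hA v (.inl hv)) (ihψ fun v hv => hA v (.inr hv))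
  | box φ ih => exact image_boxConcept_le hb₁ hb₂ h₅ (gc.le_iff_le.1 (ih hA))
  | dia φ ih => exact gc.le_iff_le.2 (diaConcept_le_preimage hd₁ hd₂ h₆ (ih hA))
  | mu v φ ih =>
    rw [sem_mu, sem_mu]
    exact gc.l_lfp_le_lfp fun c₁ c₂ hc => ih <|
      Function.update_rel_update (R := (Concept.image I₂ S · ≤ ·)) hA hc
  | nu v φ ih =>
    rw [sem_nu, sem_nu]
    exact OrderHom.apply_gfp_le_gfp _ fun c₁ c₂ hc => ih <|
      Function.update_rel_update (R := (Concept.image I₂ S · ≤ ·)) hA hc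

end MuForm

theorem simulation_invariance_general [DecidableEq Var] {G₁ M₁ G₂ M₂ : Type*}
    (I₁ : G₁ → M₁ → Prop) (Rb₁ : G₁ → M₁ → Prop) (Rd₁ : M₁ → G₁ → Prop)
    (hb₁0 : ∀ m : M₁,
      lowerPolar I₁ (upperPolar I₁ (lowerPolar Rb₁ {m})) = lowerPolar Rb₁ {m})
    (hd₁0 : ∀ g : G₁,
      upperPolar I₁ (lowerPolar I₁ (lowerPolar Rd₁ {g})) = lowerPolar Rd₁ {g})
    (V₁ : P → Concept G₁ M₁ I₁)
    (I₂ : G₂ → M₂ → Prop) (Rb₂ : G₂ → M₂ → Prop) (Rd₂ : M₂ → G₂ → Prop)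
    (hb₂0 : ∀ m : M₂,
      lowerPolar I₂ (upperPolar I₂ (lowerPolar Rb₂ {m})) = lowerPolar Rb₂ {m})
    (hd₂0 : ∀ g : G₂,
      upperPolar I₂ (lowerPolar I₂ (lowerPolar Rd₂ {g})) = lowerPolar Rd₂ {g})
    (V₂ : P → Concept G₂ M₂ I₂)
    (S : G₁ → G₂ → Prop) (T : M₁ → M₂ → Prop)
    (hsim : IsSimulation I₁ Rb₁ Rd₁ V₁ I₂ Rb₂ Rd₂ V₂ S T)
    (φ : MuForm P Var) (hφ : φ.freeVars = ∅)
    (A₁ : Var → Concept G₁ M₁ I₁) (A₂ : Var → Concept G₂ M₂ I₂) :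
    (∀ g₁ g₂, S g₁ g₂ →
        g₁ ∈ (MuForm.sem I₁ Rb₁ Rd₁ hb₁0 hd₁0 V₁ φ A₁).extent →
        g₂ ∈ (MuForm.sem I₂ Rb₂ Rd₂ hb₂0 hd₂0 V₂ φ A₂).extent) ∧
    (∀ m₁ m₂, T m₁ m₂ →
        m₂ ∈ (MuForm.sem I₂ Rb₂ Rd₂ hb₂0 hd₂0 V₂ φ A₂).intent →
        m₁ ∈ (MuForm.sem I₁ Rb₁ Rd₁ hb₁0 hd₁0 V₁ φ A₁).intent) := by
  have key : Concept.image I₂ S (φ.sem I₁ Rb₁ Rd₁ hb₁0 hd₁0 V₁ A₁) ≤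
      φ.sem I₂ Rb₂ Rd₂ hb₂0 hd₂0 V₂ A₂ :=
    MuForm.image_sem_le hsim φ (by simp [hφ])
  exact ⟨Concept.image_le_iff.1 key,
    Concept.le_preimage_iff.1 (hsim.gc_image_preimage.le_iff_le.1 key)⟩

/-- If `(S, T)` is a simulation from the polarity-based model `𝕄₁` to the
polarity-based model `𝕄₂`, then for every μ-calculus formula `φ` with no free variables:
(1) `g₁ S g₂` and `𝕄₁, g₁ ⊩ φ` imply `𝕄₂, g₂ ⊩ φ`; and
(2) `m₁ T m₂` and `𝕄₂, m₂ ≻ φ` imply `𝕄₁, m₁ ≻ φ`. -/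
theorem simulation_invariance [DecidableEq Var] {G₁ M₁ G₂ M₂ : Type*}
    (I₁ : G₁ → M₁ → Prop) (Rb₁ : G₁ → M₁ → Prop) (Rd₁ : M₁ → G₁ → Prop)
    (hb₁0 : ∀ m : M₁,
      lowerPolar I₁ (upperPolar I₁ (lowerPolar Rb₁ {m})) = lowerPolar Rb₁ {m})
    (hb₁1 : ∀ g : G₁,
      upperPolar I₁ (lowerPolar I₁ (upperPolar Rb₁ {g})) = upperPolar Rb₁ {g})
    (hd₁0 : ∀ g : G₁,
      upperPolar I₁ (lowerPolar I₁ (lowerPolar Rd₁ {g})) = lowerPolar Rd₁ {g})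
    (hd₁1 : ∀ m : M₁,
      lowerPolar I₁ (upperPolar I₁ (upperPolar Rd₁ {m})) = upperPolar Rd₁ {m})
    (V₁ : P → Concept G₁ M₁ I₁)
    (I₂ : G₂ → M₂ → Prop) (Rb₂ : G₂ → M₂ → Prop) (Rd₂ : M₂ → G₂ → Prop)
    (hb₂0 : ∀ m : M₂,
      lowerPolar I₂ (upperPolar I₂ (lowerPolar Rb₂ {m})) = lowerPolar Rb₂ {m})
    (hb₂1 : ∀ g : G₂,
      upperPolar I₂ (lowerPolar I₂ (upperPolar Rb₂ {g})) = upperPolar Rb₂ {g})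
    (hd₂0 : ∀ g : G₂,
      upperPolar I₂ (lowerPolar I₂ (lowerPolar Rd₂ {g})) = lowerPolar Rd₂ {g})
    (hd₂1 : ∀ m : M₂,
      lowerPolar I₂ (upperPolar I₂ (upperPolar Rd₂ {m})) = upperPolar Rd₂ {m})
    (V₂ : P → Concept G₂ M₂ I₂)
    (S : G₁ → G₂ → Prop) (T : M₁ → M₂ → Prop)
    (hsim : IsSimulation I₁ Rb₁ Rd₁ V₁ I₂ Rb₂ Rd₂ V₂ S T)
    (φ : MuForm P Var) (hφ : φ.freeVars = ∅)
    (A₁ : Var → Concept G₁ M₁ I₁) (A₂ : Var → Concept G₂ M₂ I₂) :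
    (∀ g₁ g₂, S g₁ g₂ →
        g₁ ∈ (MuForm.sem I₁ Rb₁ Rd₁ hb₁0 hd₁0 V₁ φ A₁).extent →
        g₂ ∈ (MuForm.sem I₂ Rb₂ Rd₂ hb₂0 hd₂0 V₂ φ A₂).extent) ∧
    (∀ m₁ m₂, T m₁ m₂ →
        m₂ ∈ (MuForm.sem I₂ Rb₂ Rd₂ hb₂0 hd₂0 V₂ φ A₂).intent →
        m₁ ∈ (MuForm.sem I₁ Rb₁ Rd₁ hb₁0 hd₁0 V₁ φ A₁).intent) :=
  simulation_invariance_general I₁ Rb₁ Rd₁ hb₁0 hd₁0 V₁ I₂ Rb₂ Rd₂ hb₂0 hd₂0 V₂ S T hsim φ hφ A₁ A₂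
end

section
/- Let 𝕄₁ = ((G₁, M₁, I₁, R_□₁, R_◇₁), V₁) and 𝕄₂ = ((G₂, M₂, I₂, R_□₂, R_◇₂), V₂) be polarity-based models for the non-distributive modal μ-calculus. If g₁ ∈ G₁ and g₂ ∈ G₂ are bisimilar (there exist a simulation (S₁, T₁) from 𝕄₁ to 𝕄₂ and a simulation (S₂, T₂) from 𝕄₂ to 𝕄₁ with g₁ S₁ g₂ and g₂ S₂ g₁), then for every formula φ of the non-distributive modal μ-calculus all of whose variables are bound, 𝕄₁, g₁ ⊩ φ if and only if 𝕄₂, g₂ ⊩ φ. Likewise, if m₁ ∈ M₁ and m₂ ∈ M₂ are bisimilar (there exist such simulations with m₁ T₁ m₂ and m₂ T₂ m₁), then 𝕄₁, m₁ ≻ φ if and only if 𝕄₂, m₂ ≻ φ for every such formula φ. -/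
variable {P Var G M : Type*}

/-!
A simulation `(S, T)` transfers the meaning of every formula: extensions forward along `S`
and intensions backward along `T`. For concepts, conditions (3) and (4) make each of these
two halves imply the other, and conditions (5) and (6) are what `□` and `◇` need. For the
least fixed point, the concepts that transfer to a given `c₂` are exactly those below the
concept generated by `T⁻¹[⦃c₂⦄]`; so this concept is a pre-fixed point in `𝕄₁` whenever
`c₂` is one in `𝕄₂`, and the least fixed point of `𝕄₁` transfers to every pre-fixed point
of `𝕄₂`. Greatest fixed points are dual, with the concept generated by `S[⟦c₁⟧]`. Applying
this to the simulations in both directions gives the theorem.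
-/

section Transfer

variable {G₁ M₁ G₂ M₂ : Type*}

/-- Conditions (3) and (5) of a simulation are `SimForth` for `I` and for `R_□`; conditions (4)
and (6) are `SimBack` for `I` and for `Function.swap R_◇`. -/
def SimForth (R₁ : G₁ → M₁ → Prop) (R₂ : G₂ → M₂ → Prop)
    (S : G₁ → G₂ → Prop) (T : M₁ → M₂ → Prop) : Prop :=
  ∀ g₁ g₂ m₂, S g₁ g₂ → ¬ R₂ g₂ m₂ → ∃ m₁, ¬ R₁ g₁ m₁ ∧ T m₁ m₂

def SimBack (R₁ : G₁ → M₁ → Prop) (R₂ : G₂ → M₂ → Prop)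
    (S : G₁ → G₂ → Prop) (T : M₁ → M₂ → Prop) : Prop :=
  ∀ m₁ m₂ g₁, T m₁ m₂ → ¬ R₁ g₁ m₁ → ∃ g₂, ¬ R₂ g₂ m₂ ∧ S g₁ g₂

structure Transfers {I₁ : G₁ → M₁ → Prop} {I₂ : G₂ → M₂ → Prop}
    (S : G₁ → G₂ → Prop) (T : M₁ → M₂ → Prop)
    (c₁ : Concept G₁ M₁ I₁) (c₂ : Concept G₂ M₂ I₂) : Prop where
  extent : ∀ ⦃g₁ g₂⦄, S g₁ g₂ → g₁ ∈ c₁.extent → g₂ ∈ c₂.extent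
  intent : ∀ ⦃m₁ m₂⦄, T m₁ m₂ → m₂ ∈ c₂.intent → m₁ ∈ c₁.intent

variable {S : G₁ → G₂ → Prop} {T : M₁ → M₂ → Prop}

theorem mem_lowerPolar_of_simForth {R₁ : G₁ → M₁ → Prop} {R₂ : G₂ → M₂ → Prop}
    (hR : SimForth R₁ R₂ S T) {Y₁ : Set M₁} {Y₂ : Set M₂}
    (hY : ∀ ⦃m₁ m₂⦄, T m₁ m₂ → m₂ ∈ Y₂ → m₁ ∈ Y₁) {g₁ : G₁} {g₂ : G₂} (hS : S g₁ g₂)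
    (hg₁ : g₁ ∈ lowerPolar R₁ Y₁) : g₂ ∈ lowerPolar R₂ Y₂ := by
  intro m₂ hm₂
  by_contra hR₂
  obtain ⟨m₁, hR₁, hT⟩ := hR g₁ g₂ m₂ hS hR₂
  exact hR₁ (hg₁ (hY hT hm₂))

theorem mem_upperPolar_of_simBack {R₁ : G₁ → M₁ → Prop} {R₂ : G₂ → M₂ → Prop}
    (hR : SimBack R₁ R₂ S T) {B₁ : Set G₁} {B₂ : Set G₂}
    (hB : ∀ ⦃g₁ g₂⦄, S g₁ g₂ → g₁ ∈ B₁ → g₂ ∈ B₂) {m₁ : M₁} {m₂ : M₂} (hT : T m₁ m₂)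
    (hm₂ : m₂ ∈ upperPolar R₂ B₂) : m₁ ∈ upperPolar R₁ B₁ := by
  intro g₁ hg₁
  by_contra hR₁
  obtain ⟨g₂, hR₂, hS⟩ := hR m₁ m₂ g₁ hT hR₁
  exact hR₂ (hm₂ (hB hS hg₁))

variable {I₁ : G₁ → M₁ → Prop} {I₂ : G₂ → M₂ → Prop}
  {c₁ d₁ : Concept G₁ M₁ I₁} {c₂ d₂ : Concept G₂ M₂ I₂}

namespace Transfers

theorem of_intent (hI : SimForth I₁ I₂ S T)
    (h : ∀ ⦃m₁ m₂⦄, T m₁ m₂ → m₂ ∈ c₂.intent → m₁ ∈ c₁.intent) : Transfers S T c₁ c₂ where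
  extent g₁ g₂ hS hg₁ := by
    rw [← c₁.lowerPolar_intent] at hg₁
    rw [← c₂.lowerPolar_intent]
    exact mem_lowerPolar_of_simForth hI h hS hg₁
  intent := h

theorem of_extent (hI : SimBack I₁ I₂ S T)
    (h : ∀ ⦃g₁ g₂⦄, S g₁ g₂ → g₁ ∈ c₁.extent → g₂ ∈ c₂.extent) : Transfers S T c₁ c₂ where
  extent := h
  intent m₁ m₂ hT hm₂ := by
    rw [← c₂.upperPolar_extent] at hm₂
    rw [← c₁.upperPolar_extent]
    exact mem_upperPolar_of_simBack hI h hT hm₂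

theorem mono (h : Transfers S T c₁ c₂) (h₁ : d₁ ≤ c₁) (h₂ : c₂ ≤ d₂) : Transfers S T d₁ d₂ where
  extent _ _ hS hg₁ := Concept.extent_subset_extent_iff.2 h₂ (h.extent hS (h₁ hg₁))
  intent _ _ hT hm₂ :=
    Concept.intent_subset_intent_iff.2 h₁ (h.intent hT (Concept.intent_subset_intent_iff.2 h₂ hm₂))

end Transfers

theorem transfers_iff_le_ofAttributes (hI : SimForth I₁ I₂ S T) :
    Transfers S T d₁ c₂ ↔ d₁ ≤ Concept.ofAttributes I₁ {m₁ | ∃ m₂ ∈ c₂.intent, T m₁ m₂} := by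
  rw [Concept.le_ofAttributes_iff]
  constructor
  · rintro h m₁ ⟨m₂, hm₂, hT⟩
    exact h.intent hT hm₂
  · exact fun h ↦ .of_intent hI fun m₁ m₂ hT hm₂ ↦ h ⟨m₂, hm₂, hT⟩

theorem transfers_iff_ofObjects_le (hI : SimBack I₁ I₂ S T) :
    Transfers S T c₁ d₂ ↔ Concept.ofObjects I₂ {g₂ | ∃ g₁ ∈ c₁.extent, S g₁ g₂} ≤ d₂ := by
  rw [Concept.ofObjects_le_iff]
  constructor
  · rintro h g₂ ⟨g₁, hg₁, hS⟩
    exact h.extent hS hg₁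
  · exact fun h ↦ .of_extent hI fun g₁ g₂ hS hg₁ ↦ h ⟨g₁, hg₁, hS⟩

namespace Transfers

theorem bot (hI : SimForth I₁ I₂ S T) :
    Transfers S T (⊥ : Concept G₁ M₁ I₁) (⊥ : Concept G₂ M₂ I₂) :=
  .of_intent hI fun m₁ _ _ _ ↦ Set.mem_univ m₁

theorem top (hI : SimBack I₁ I₂ S T) :
    Transfers S T (⊤ : Concept G₁ M₁ I₁) (⊤ : Concept G₂ M₂ I₂) :=
  .of_extent hI fun _ g₂ _ _ ↦ Set.mem_univ g₂

theorem sup (hI : SimForth I₁ I₂ S T) (hc : Transfers S T c₁ c₂) (hd : Transfers S T d₁ d₂) :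
    Transfers S T (c₁ ⊔ d₁) (c₂ ⊔ d₂) :=
  .of_intent hI fun _ _ hT hm₂ ↦ ⟨hc.intent hT hm₂.1, hd.intent hT hm₂.2⟩

theorem inf (hI : SimBack I₁ I₂ S T) (hc : Transfers S T c₁ c₂) (hd : Transfers S T d₁ d₂) :
    Transfers S T (c₁ ⊓ d₁) (c₂ ⊓ d₂) :=
  .of_extent hI fun _ _ hS hg₁ ↦ ⟨hc.extent hS hg₁.1, hd.extent hS hg₁.2⟩

theorem boxConcept {Rb₁ : G₁ → M₁ → Prop} {Rb₂ : G₂ → M₂ → Prop}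
    {hb₁ : ∀ m : M₁, lowerPolar I₁ (upperPolar I₁ (lowerPolar Rb₁ {m})) = lowerPolar Rb₁ {m}}
    {hb₂ : ∀ m : M₂, lowerPolar I₂ (upperPolar I₂ (lowerPolar Rb₂ {m})) = lowerPolar Rb₂ {m}}
    (hI : SimBack I₁ I₂ S T) (hR : SimForth Rb₁ Rb₂ S T) (h : Transfers S T c₁ c₂) :
    Transfers S T (boxConcept I₁ Rb₁ hb₁ c₁) (boxConcept I₂ Rb₂ hb₂ c₂) :=
  .of_extent hI fun _ _ hS hg₁ ↦ mem_lowerPolar_of_simForth hR h.intent hS hg₁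

theorem diaConcept {Rd₁ : M₁ → G₁ → Prop} {Rd₂ : M₂ → G₂ → Prop}
    {hd₁ : ∀ g : G₁, upperPolar I₁ (lowerPolar I₁ (lowerPolar Rd₁ {g})) = lowerPolar Rd₁ {g}}
    {hd₂ : ∀ g : G₂, upperPolar I₂ (lowerPolar I₂ (lowerPolar Rd₂ {g})) = lowerPolar Rd₂ {g}}
    (hI : SimForth I₁ I₂ S T) (hR : SimBack (Function.swap Rd₁) (Function.swap Rd₂) S T)
    (h : Transfers S T c₁ c₂) :
    Transfers S T (diaConcept I₁ Rd₁ hd₁ c₁) (diaConcept I₂ Rd₂ hd₂ c₂) :=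
  .of_intent hI fun _ _ hT hm₂ ↦ mem_upperPolar_of_simBack hR h.extent hT hm₂

theorem sInf_right {s₂ : Set (Concept G₂ M₂ I₂)} (hI : SimBack I₁ I₂ S T)
    (h : ∀ c₂ ∈ s₂, Transfers S T c₁ c₂) : Transfers S T c₁ (sInf s₂) :=
  .of_extent hI fun _ _ hS hg₁ ↦ by
    simp only [Concept.extent_sInf, Set.mem_iInter₂]
    exact fun c₂ hc₂ ↦ (h c₂ hc₂).extent hS hg₁

theorem sSup_left {s₁ : Set (Concept G₁ M₁ I₁)} (hI : SimForth I₁ I₂ S T)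
    (h : ∀ c₁ ∈ s₁, Transfers S T c₁ c₂) : Transfers S T (sSup s₁) c₂ :=
  .of_intent hI fun _ _ hT hm₂ ↦ by
    simp only [Concept.intent_sSup, Set.mem_iInter₂]
    exact fun c₁ hc₁ ↦ (h c₁ hc₁).intent hT hm₂

theorem sInf_prefixedPoints (hI₃ : SimForth I₁ I₂ S T) (hI₄ : SimBack I₁ I₂ S T)
    {f₁ : Concept G₁ M₁ I₁ → Concept G₁ M₁ I₁} {f₂ : Concept G₂ M₂ I₂ → Concept G₂ M₂ I₂}
    (hf : ∀ c₁ c₂, Transfers S T c₁ c₂ → Transfers S T (f₁ c₁) (f₂ c₂)) :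
    Transfers S T (sInf {c | f₁ c ≤ c}) (sInf {c | f₂ c ≤ c}) := by
  refine sInf_right hI₄ fun c₂ hc₂ ↦ ?_
  set c₁ := Concept.ofAttributes I₁ {m₁ | ∃ m₂ ∈ c₂.intent, T m₁ m₂}
  have hc : Transfers S T c₁ c₂ := (transfers_iff_le_ofAttributes hI₃).2 le_rfl
  have hc₁ : f₁ c₁ ≤ c₁ := (transfers_iff_le_ofAttributes hI₃).1 ((hf c₁ c₂ hc).mono le_rfl hc₂)
  exact hc.mono (sInf_le hc₁) le_rfl

theorem sSup_postfixedPoints (hI₃ : SimForth I₁ I₂ S T) (hI₄ : SimBack I₁ I₂ S T)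
    {f₁ : Concept G₁ M₁ I₁ → Concept G₁ M₁ I₁} {f₂ : Concept G₂ M₂ I₂ → Concept G₂ M₂ I₂}
    (hf : ∀ c₁ c₂, Transfers S T c₁ c₂ → Transfers S T (f₁ c₁) (f₂ c₂)) :
    Transfers S T (sSup {c | c ≤ f₁ c}) (sSup {c | c ≤ f₂ c}) := by
  refine sSup_left hI₃ fun c₁ hc₁ ↦ ?_
  set c₂ := Concept.ofObjects I₂ {g₂ | ∃ g₁ ∈ c₁.extent, S g₁ g₂}
  have hc : Transfers S T c₁ c₂ := (transfers_iff_ofObjects_le hI₄).2 le_rfl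
  have hc₂ : c₂ ≤ f₂ c₂ := (transfers_iff_ofObjects_le hI₄).1 ((hf c₁ c₂ hc).mono hc₁ le_rfl)
  exact hc.mono le_rfl (le_sSup hc₂)

end Transfers

end Transfer

section Semantics

variable [DecidableEq Var] {G₁ M₁ G₂ M₂ : Type*}
  {I₁ : G₁ → M₁ → Prop} {Rb₁ : G₁ → M₁ → Prop} {Rd₁ : M₁ → G₁ → Prop}
  {hb₁ : ∀ m : M₁, lowerPolar I₁ (upperPolar I₁ (lowerPolar Rb₁ {m})) = lowerPolar Rb₁ {m}}
  {hd₁ : ∀ g : G₁, upperPolar I₁ (lowerPolar I₁ (lowerPolar Rd₁ {g})) = lowerPolar Rd₁ {g}}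
  {V₁ : P → Concept G₁ M₁ I₁}
  {I₂ : G₂ → M₂ → Prop} {Rb₂ : G₂ → M₂ → Prop} {Rd₂ : M₂ → G₂ → Prop}
  {hb₂ : ∀ m : M₂, lowerPolar I₂ (upperPolar I₂ (lowerPolar Rb₂ {m})) = lowerPolar Rb₂ {m}}
  {hd₂ : ∀ g : G₂, upperPolar I₂ (lowerPolar I₂ (lowerPolar Rd₂ {g})) = lowerPolar Rd₂ {g}}
  {V₂ : P → Concept G₂ M₂ I₂}
  {S : G₁ → G₂ → Prop} {T : M₁ → M₂ → Prop}

theorem transfers_update {X : Set Var} {v : Var}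
    {A₁ : Var → Concept G₁ M₁ I₁} {A₂ : Var → Concept G₂ M₂ I₂}
    (hA : ∀ w ∈ X \ {v}, Transfers S T (A₁ w) (A₂ w))
    {c₁ : Concept G₁ M₁ I₁} {c₂ : Concept G₂ M₂ I₂} (hc : Transfers S T c₁ c₂) :
    ∀ w ∈ X, Transfers S T (Function.update A₁ v c₁ w) (Function.update A₂ v c₂ w) := by
  intro w hw
  by_cases hwv : w = v
  · subst hwv
    simpa using hc
  · rw [Function.update_of_ne hwv, Function.update_of_ne hwv]
    exact hA w ⟨hw, hwv⟩

theorem Transfers.sem (hsim : IsSimulation I₁ Rb₁ Rd₁ V₁ I₂ Rb₂ Rd₂ V₂ S T) (φ : MuForm P Var)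
    {A₁ : Var → Concept G₁ M₁ I₁} {A₂ : Var → Concept G₂ M₂ I₂}
    (hA : ∀ v ∈ φ.freeVars, Transfers S T (A₁ v) (A₂ v)) :
    Transfers S T (φ.sem I₁ Rb₁ Rd₁ hb₁ hd₁ V₁ A₁) (φ.sem I₂ Rb₂ Rd₂ hb₂ hd₂ V₂ A₂) := by
  obtain ⟨hV₁, hV₂, hI₃, hI₄, hRb, hRd⟩ := hsim
  induction φ generalizing A₁ A₂ with
  | atom p => exact ⟨hV₁ p, hV₂ p⟩
  | var v => exact hA v rfl
  | bot => exact .bot hI₃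
  | top => exact .top hI₄
  | or φ ψ ihφ ihψ =>
    exact .sup hI₃ (ihφ fun v hv ↦ hA v (.inl hv)) (ihψ fun v hv ↦ hA v (.inr hv))
  | and φ ψ ihφ ihψ =>
    exact .inf hI₄ (ihφ fun v hv ↦ hA v (.inl hv)) (ihψ fun v hv ↦ hA v (.inr hv))
  | box φ ih => exact .boxConcept hI₄ hRb (ih hA)
  | dia φ ih => exact .diaConcept hI₃ hRd (ih hA)
  | mu v φ ih => exact .sInf_prefixedPoints hI₃ hI₄ fun _ _ hc ↦ ih (transfers_update hA hc)
  | nu v φ ih => exact .sSup_postfixedPoints hI₃ hI₄ fun _ _ hc ↦ ih (transfers_update hA hc)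

theorem Transfers.sem_of_freeVars_eq_empty (hsim : IsSimulation I₁ Rb₁ Rd₁ V₁ I₂ Rb₂ Rd₂ V₂ S T)
    {φ : MuForm P Var} (hφ : φ.freeVars = ∅)
    (A₁ : Var → Concept G₁ M₁ I₁) (A₂ : Var → Concept G₂ M₂ I₂) :
    Transfers S T (φ.sem I₁ Rb₁ Rd₁ hb₁ hd₁ V₁ A₁) (φ.sem I₂ Rb₂ Rd₂ hb₂ hd₂ V₂ A₂) :=
  .sem hsim φ (by simp [hφ])

end Semantics

theorem bisimulation_invariance_general [DecidableEq Var] {G₁ M₁ G₂ M₂ : Type*}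
    (I₁ : G₁ → M₁ → Prop) (Rb₁ : G₁ → M₁ → Prop) (Rd₁ : M₁ → G₁ → Prop)
    (hb₁0 : ∀ m : M₁,
      lowerPolar I₁ (upperPolar I₁ (lowerPolar Rb₁ {m})) = lowerPolar Rb₁ {m})
    (hd₁0 : ∀ g : G₁,
      upperPolar I₁ (lowerPolar I₁ (lowerPolar Rd₁ {g})) = lowerPolar Rd₁ {g})
    (V₁ : P → Concept G₁ M₁ I₁)
    (I₂ : G₂ → M₂ → Prop) (Rb₂ : G₂ → M₂ → Prop) (Rd₂ : M₂ → G₂ → Prop)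
    (hb₂0 : ∀ m : M₂,
      lowerPolar I₂ (upperPolar I₂ (lowerPolar Rb₂ {m})) = lowerPolar Rb₂ {m})
    (hd₂0 : ∀ g : G₂,
      upperPolar I₂ (lowerPolar I₂ (lowerPolar Rd₂ {g})) = lowerPolar Rd₂ {g})
    (V₂ : P → Concept G₂ M₂ I₂) :
    (∀ g₁ g₂,
      (∃ (S₁ : G₁ → G₂ → Prop) (T₁ : M₁ → M₂ → Prop),
        IsSimulation I₁ Rb₁ Rd₁ V₁ I₂ Rb₂ Rd₂ V₂ S₁ T₁ ∧ S₁ g₁ g₂) →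
      (∃ (S₂ : G₂ → G₁ → Prop) (T₂ : M₂ → M₁ → Prop),
        IsSimulation I₂ Rb₂ Rd₂ V₂ I₁ Rb₁ Rd₁ V₁ S₂ T₂ ∧ S₂ g₂ g₁) →
      ∀ φ : MuForm P Var, φ.freeVars = ∅ →
      ∀ (A₁ : Var → Concept G₁ M₁ I₁) (A₂ : Var → Concept G₂ M₂ I₂),
        (g₁ ∈ (MuForm.sem I₁ Rb₁ Rd₁ hb₁0 hd₁0 V₁ φ A₁).extent ↔
         g₂ ∈ (MuForm.sem I₂ Rb₂ Rd₂ hb₂0 hd₂0 V₂ φ A₂).extent)) ∧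
    (∀ m₁ m₂,
      (∃ (S₁ : G₁ → G₂ → Prop) (T₁ : M₁ → M₂ → Prop),
        IsSimulation I₁ Rb₁ Rd₁ V₁ I₂ Rb₂ Rd₂ V₂ S₁ T₁ ∧ T₁ m₁ m₂) →
      (∃ (S₂ : G₂ → G₁ → Prop) (T₂ : M₂ → M₁ → Prop),
        IsSimulation I₂ Rb₂ Rd₂ V₂ I₁ Rb₁ Rd₁ V₁ S₂ T₂ ∧ T₂ m₂ m₁) →
      ∀ φ : MuForm P Var, φ.freeVars = ∅ →
      ∀ (A₁ : Var → Concept G₁ M₁ I₁) (A₂ : Var → Concept G₂ M₂ I₂),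
        (m₁ ∈ (MuForm.sem I₁ Rb₁ Rd₁ hb₁0 hd₁0 V₁ φ A₁).intent ↔
         m₂ ∈ (MuForm.sem I₂ Rb₂ Rd₂ hb₂0 hd₂0 V₂ φ A₂).intent)) := by
  refine ⟨?_, ?_⟩
  · rintro g₁ g₂ ⟨S₁, T₁, hsim₁, hS₁⟩ ⟨S₂, T₂, hsim₂, hS₂⟩ φ hφ A₁ A₂
    exact ⟨(Transfers.sem_of_freeVars_eq_empty hsim₁ hφ A₁ A₂).extent hS₁,
      (Transfers.sem_of_freeVars_eq_empty hsim₂ hφ A₂ A₁).extent hS₂⟩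
  · rintro m₁ m₂ ⟨S₁, T₁, hsim₁, hT₁⟩ ⟨S₂, T₂, hsim₂, hT₂⟩ φ hφ A₁ A₂
    exact ⟨(Transfers.sem_of_freeVars_eq_empty hsim₂ hφ A₂ A₁).intent hT₂,
      (Transfers.sem_of_freeVars_eq_empty hsim₁ hφ A₁ A₂).intent hT₁⟩

/-- If `g₁` and `g₂` (resp. `m₁` and `m₂`) are bisimilar elements of two
polarity-based models `𝕄₁` and `𝕄₂` (i.e. there are simulations `(S₁,T₁) : 𝕄₁ → 𝕄₂` and
`(S₂,T₂) : 𝕄₂ → 𝕄₁` with `g₁ S₁ g₂` and `g₂ S₂ g₁`, resp. `m₁ T₁ m₂` and `m₂ T₂ m₁`),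
then for every μ-calculus formula `φ` with no free variables, `𝕄₁, g₁ ⊩ φ` iff
`𝕄₂, g₂ ⊩ φ` (resp. `𝕄₁, m₁ ≻ φ` iff `𝕄₂, m₂ ≻ φ`). -/
theorem bisimulation_invariance [DecidableEq Var] {G₁ M₁ G₂ M₂ : Type*}
    (I₁ : G₁ → M₁ → Prop) (Rb₁ : G₁ → M₁ → Prop) (Rd₁ : M₁ → G₁ → Prop)
    (hb₁0 : ∀ m : M₁,
      lowerPolar I₁ (upperPolar I₁ (lowerPolar Rb₁ {m})) = lowerPolar Rb₁ {m})
    (hb₁1 : ∀ g : G₁,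
      upperPolar I₁ (lowerPolar I₁ (upperPolar Rb₁ {g})) = upperPolar Rb₁ {g})
    (hd₁0 : ∀ g : G₁,
      upperPolar I₁ (lowerPolar I₁ (lowerPolar Rd₁ {g})) = lowerPolar Rd₁ {g})
    (hd₁1 : ∀ m : M₁,
      lowerPolar I₁ (upperPolar I₁ (upperPolar Rd₁ {m})) = upperPolar Rd₁ {m})
    (V₁ : P → Concept G₁ M₁ I₁)
    (I₂ : G₂ → M₂ → Prop) (Rb₂ : G₂ → M₂ → Prop) (Rd₂ : M₂ → G₂ → Prop)
    (hb₂0 : ∀ m : M₂,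
      lowerPolar I₂ (upperPolar I₂ (lowerPolar Rb₂ {m})) = lowerPolar Rb₂ {m})
    (hb₂1 : ∀ g : G₂,
      upperPolar I₂ (lowerPolar I₂ (upperPolar Rb₂ {g})) = upperPolar Rb₂ {g})
    (hd₂0 : ∀ g : G₂,
      upperPolar I₂ (lowerPolar I₂ (lowerPolar Rd₂ {g})) = lowerPolar Rd₂ {g})
    (hd₂1 : ∀ m : M₂,
      lowerPolar I₂ (upperPolar I₂ (upperPolar Rd₂ {m})) = upperPolar Rd₂ {m})
    (V₂ : P → Concept G₂ M₂ I₂) :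
    (∀ g₁ g₂,
      (∃ (S₁ : G₁ → G₂ → Prop) (T₁ : M₁ → M₂ → Prop),
        IsSimulation I₁ Rb₁ Rd₁ V₁ I₂ Rb₂ Rd₂ V₂ S₁ T₁ ∧ S₁ g₁ g₂) →
      (∃ (S₂ : G₂ → G₁ → Prop) (T₂ : M₂ → M₁ → Prop),
        IsSimulation I₂ Rb₂ Rd₂ V₂ I₁ Rb₁ Rd₁ V₁ S₂ T₂ ∧ S₂ g₂ g₁) →
      ∀ φ : MuForm P Var, φ.freeVars = ∅ →
      ∀ (A₁ : Var → Concept G₁ M₁ I₁) (A₂ : Var → Concept G₂ M₂ I₂),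
        (g₁ ∈ (MuForm.sem I₁ Rb₁ Rd₁ hb₁0 hd₁0 V₁ φ A₁).extent ↔
         g₂ ∈ (MuForm.sem I₂ Rb₂ Rd₂ hb₂0 hd₂0 V₂ φ A₂).extent)) ∧
    (∀ m₁ m₂,
      (∃ (S₁ : G₁ → G₂ → Prop) (T₁ : M₁ → M₂ → Prop),
        IsSimulation I₁ Rb₁ Rd₁ V₁ I₂ Rb₂ Rd₂ V₂ S₁ T₁ ∧ T₁ m₁ m₂) →
      (∃ (S₂ : G₂ → G₁ → Prop) (T₂ : M₂ → M₁ → Prop),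
        IsSimulation I₂ Rb₂ Rd₂ V₂ I₁ Rb₁ Rd₁ V₁ S₂ T₂ ∧ T₂ m₂ m₁) →
      ∀ φ : MuForm P Var, φ.freeVars = ∅ →
      ∀ (A₁ : Var → Concept G₁ M₁ I₁) (A₂ : Var → Concept G₂ M₂ I₂),
        (m₁ ∈ (MuForm.sem I₁ Rb₁ Rd₁ hb₁0 hd₁0 V₁ φ A₁).intent ↔
         m₂ ∈ (MuForm.sem I₂ Rb₂ Rd₂ hb₂0 hd₂0 V₂ φ A₂).intent)) :=
  bisimulation_invariance_general I₁ Rb₁ Rd₁ hb₁0 hd₁0 V₁ I₂ Rb₂ Rd₂ hb₂0 hd₂0 V₂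
end

section
/- Let (G, M, I) be a polarity and R_□ ⊆ G × M a relation such that R_□^{(0)}[{m}] is Galois-stable for every m ∈ M. Then for every formal concept c of (G, M, I), the pair [R_□]c := (R_□^{(0)}[⦃c⦄], (R_□^{(0)}[⦃c⦄])^↑) is a formal concept, and the map c ↦ [R_□]c is monotone (order-preserving) on the concept lattice. -/
theorem lowerPolar_eq_biInter_singleton {α β : Type*} (r : α → β → Prop) (t : Set β) :
    lowerPolar r t = ⋂ b ∈ t, lowerPolar r {b} := by
  conv_lhs => rw [← Set.biUnion_of_singleton t]
  exact lowerPolar_iUnion₂ ..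

theorem Order.isExtent_lowerPolar_of_isExtent_singleton {G M : Type*} {I R : G → M → Prop}
    (h : ∀ m, IsExtent I (lowerPolar R {m})) (t : Set M) : IsExtent I (lowerPolar R t) :=
  lowerPolar_eq_biInter_singleton R t ▸ IsExtent.iInter₂ _ fun m _ ↦ h m

theorem Concept.monotone_lowerPolar_intent {G M : Type*} {I : G → M → Prop}
    (R : G → M → Prop) : Monotone fun c : Concept G M I ↦ lowerPolar R c.intent :=
  fun _ _ hle ↦ lowerPolar_anti R (intent_subset_intent_iff.2 hle)

/-- Let `(G, M, I)` be a polarity and `R ⊆ G × M` a relation such that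
`R^{(0)}[{m}]` is Galois-stable for every `m ∈ M`. Then for every formal concept `c`,
`[R]c := (R^{(0)}[⦃c⦄], (R^{(0)}[⦃c⦄])^↑)` is a formal concept, and `c ↦ [R]c` is
monotone on the concept lattice. -/
theorem box_operator_well_defined_and_monotone {G M : Type*} (I : G → M → Prop)
    (R : G → M → Prop)
    (hcomp : ∀ m : M,
      lowerPolar I (upperPolar I (lowerPolar R {m})) = lowerPolar R {m}) :
    (∀ c : Concept G M I, ∃ d : Concept G M I,
        d.extent = lowerPolar R c.intent ∧ d.intent = upperPolar I (lowerPolar R c.intent)) ∧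
    (∀ c₁ c₂ d₁ d₂ : Concept G M I, d₁.extent = lowerPolar R c₁.intent →
        d₂.extent = lowerPolar R c₂.intent → c₁ ≤ c₂ → d₁ ≤ d₂) := by
  have hext : ∀ t, Order.IsExtent I (lowerPolar R t) :=
    Order.isExtent_lowerPolar_of_isExtent_singleton fun m ↦ Order.isExtent_iff.2 (hcomp m)
  refine ⟨fun c ↦ ⟨Concept.ofIsExtent I _ (hext c.intent), rfl, rfl⟩, ?_⟩
  intro c₁ c₂ d₁ d₂ h₁ h₂ hle
  rw [← Concept.extent_subset_extent_iff, h₁, h₂]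
  exact Concept.monotone_lowerPolar_intent R hle
end

section
/- Let 𝔽 = (G, M, I, R_□, R_◇) be an enriched formal context with concept lattice 𝔓⁺. (1) If I ⊆ R_□, then c ≤ [R_□]c for every formal concept c, where [R_□]c = (R_□^{(0)}[⦃c⦄], (R_□^{(0)}[⦃c⦄])^↑). (2) If g I m implies m R_◇ g for all g ∈ G and m ∈ M (i.e., I ⊆ R_◇⁻¹), then ⟨R_◇⟩c ≤ c for every formal concept c, where ⟨R_◇⟩c = ((R_◇^{(0)}[⟦c⟧])^↓, R_◇^{(0)}[⟦c⟧]). -/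
section Polars

variable {α β : Type*} {r s : α → β → Prop}

theorem lowerPolar_mono_rel (h : r ≤ s) (t : Set β) : lowerPolar r t ⊆ lowerPolar s t :=
  fun _ ha _ hb => h _ _ (ha hb)

theorem upperPolar_mono_rel (h : r ≤ s) (t : Set α) : upperPolar r t ⊆ upperPolar s t :=
  fun _ hb _ ha => h _ _ (hb ha)

namespace Concept

theorem extent_subset_lowerPolar_intent (c : Concept α β r) (h : r ≤ s) :
    c.extent ⊆ lowerPolar s c.intent :=
  c.lowerPolar_intent ▸ lowerPolar_mono_rel h c.intent

theorem intent_subset_lowerPolar_extent {s : β → α → Prop} (c : Concept α β r)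
    (h : r ≤ Function.swap s) : c.intent ⊆ lowerPolar s c.extent :=
  c.upperPolar_extent ▸ upperPolar_mono_rel h c.extent

end Concept

end Polars

theorem inflationary_box_and_deflationary_diamond_general {G M : Type*} (I : G → M → Prop)
    (Rbox : G → M → Prop) (Rdia : M → G → Prop) :
    ((∀ g m, I g m → Rbox g m) → ∀ c d : Concept G M I,
        d.extent = lowerPolar Rbox c.intent → d.intent = upperPolar I d.extent → c ≤ d) ∧
    ((∀ g m, I g m → Rdia m g) → ∀ c d : Concept G M I,
        d.intent = lowerPolar Rdia c.extent → d.extent = lowerPolar I d.intent → d ≤ c) := by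
  constructor
  · intro hIR c d hd _
    rw [← Concept.extent_subset_extent_iff, hd]
    exact c.extent_subset_lowerPolar_intent hIR
  · intro hIR c d hd _
    rw [← Concept.intent_subset_intent_iff, hd]
    exact c.intent_subset_lowerPolar_extent hIR

/-- Let `(G, M, I, R_□, R_◇)` be an enriched formal context.
(1) If `I ⊆ R_□` then `c ≤ [R_□]c` for every formal concept `c`.
(2) If `g I m` implies `m R_◇ g` then `⟨R_◇⟩c ≤ c` for every formal concept `c`. -/
theorem inflationary_box_and_deflationary_diamond {G M : Type*} (I : G → M → Prop)
    (Rbox : G → M → Prop) (Rdia : M → G → Prop)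
    (hcompBox0 : ∀ m : M,
      lowerPolar I (upperPolar I (lowerPolar Rbox {m})) = lowerPolar Rbox {m})
    (hcompBox1 : ∀ g : G,
      upperPolar I (lowerPolar I (upperPolar Rbox {g})) = upperPolar Rbox {g})
    (hcompDia0 : ∀ g : G,
      upperPolar I (lowerPolar I (lowerPolar Rdia {g})) = lowerPolar Rdia {g})
    (hcompDia1 : ∀ m : M,
      lowerPolar I (upperPolar I (upperPolar Rdia {m})) = upperPolar Rdia {m}) :
    ((∀ g m, I g m → Rbox g m) → ∀ c d : Concept G M I,
        d.extent = lowerPolar Rbox c.intent → d.intent = upperPolar I d.extent → c ≤ d) ∧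
    ((∀ g m, I g m → Rdia m g) → ∀ c d : Concept G M I,
        d.intent = lowerPolar Rdia c.extent → d.extent = lowerPolar I d.intent → d ≤ c) :=
  inflationary_box_and_deflationary_diamond_general I Rbox Rdia
end
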